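/- arXiv:1711.06058 — 2 statements merged into one kernel-verified Lean document; each statement's English description precedes it below -/
import Mathlib

section
/- For binary digits t_k ∈ {0,1} and fixed σ_k ∈ {0,1}, one has ∑_{t₁,…,t_{n−1}∈{0,1}} (∑_{k=1}^{n−1} t_k 2^{−(n−k)}) · (∑_{k=1}^{n−1} (t_k ⊕ σ_k) 2^{−k}) = (1/4)∑_{k=1}^{n−1}(1 ⊕ σ_k) + (1/8)∑_{k₁≠k₂, 1≤k₁,k₂≤n−1} 2^{k₁−k₂}, where ⊕ denotes addition modulo 2 in {0,1}. -/
/-- The real value of a binary digit. -/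
def bval (b : Bool) : ℝ := if b then 1 else 0

open Finset
lemma sum_pi_bool {m : ℕ} (g : Fin m → Bool → ℝ) :
    ∑ t : Fin m → Bool, ∏ i, g i (t i) = ∏ i, (g i false + g i true) := by
  have h : ∀ i : Fin m, g i false + g i true = ∑ b : Bool, g i b := by
    intro i; simp; ring
  simp_rw [h]
  rw [Finset.prod_univ_sum]
  rw [Fintype.piFinset_univ]

lemma sum_single {m : ℕ} (k : Fin m) (h : Bool → ℝ) :
    ∑ t : Fin m → Bool, h (t k) = 2^(m-1) * (h false + h true) := by
  have e : ∀ t : Fin m → Bool, h (t k) = ∏ i, (if i = k then h (t i) else 1) := by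
    intro t; rw [Finset.prod_ite_eq' univ k (fun i => h (t i))]; simp
  simp_rw [e]
  rw [sum_pi_bool (fun i b => if i = k then h b else 1)]
  rw [← Finset.mul_prod_erase univ _ (mem_univ k)]
  rw [if_pos rfl]
  rw [Finset.prod_congr rfl (fun i hi => by
    rw [if_neg (Finset.ne_of_mem_erase hi), if_neg (Finset.ne_of_mem_erase hi)]),
    Finset.prod_const]
  have : (univ.erase k).card = m - 1 := by
    rw [Finset.card_erase_of_mem (mem_univ k)]; simp
  rw [this]; norm_num; ring

lemma sum_double {m : ℕ} (k j : Fin m) (hkj : k ≠ j) (h h' : Bool → ℝ) :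
    ∑ t : Fin m → Bool, h (t k) * h' (t j)
      = (h false + h true) * (h' false + h' true) * 2^m / 4 := by
  have e : ∀ t : Fin m → Bool, h (t k) * h' (t j)
      = ∏ i, (if i = k then h (t i) else if i = j then h' (t i) else 1) := by
    intro t
    rw [← Finset.mul_prod_erase univ _ (mem_univ k), if_pos rfl,
      ← Finset.mul_prod_erase _ _ (Finset.mem_erase.2 ⟨(Ne.symm hkj), mem_univ j⟩),
      if_neg (Ne.symm hkj), if_pos rfl]
    rw [Finset.prod_congr rfl (fun i hi => ?_), Finset.prod_const_one, mul_one]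
    have h1 := Finset.ne_of_mem_erase hi
    have h2 := Finset.ne_of_mem_erase (Finset.mem_of_mem_erase hi)
    rw [if_neg h2, if_neg h1]
  simp_rw [e]
  rw [sum_pi_bool (fun i b => if i = k then h b else if i = j then h' b else 1)]
  have key : ∀ i ∈ univ, ((if i = k then h false else if i = j then h' false else 1)
      + (if i = k then h true else if i = j then h' true else 1))
      = (if i = k then h false + h true else if i = j then h' false + h' true else 2) := by
    intro i _
    by_cases h1 : i = k
    · simp [h1]
    · rcases eq_or_ne i j with h2 | h2
      · simp [h1, h2, Ne.symm hkj]
      · norm_num [h1, h2]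
  rw [Finset.prod_congr rfl key]
  rw [← Finset.mul_prod_erase univ _ (mem_univ k), if_pos rfl,
    ← Finset.mul_prod_erase _ _ (Finset.mem_erase.2 ⟨(Ne.symm hkj), mem_univ j⟩),
    if_neg (Ne.symm hkj), if_pos rfl]
  have hc : ((univ.erase k).erase j).card = m - 2 := by
    rw [Finset.card_erase_of_mem (Finset.mem_erase.2 ⟨(Ne.symm hkj), mem_univ j⟩),
      Finset.card_erase_of_mem (mem_univ k)]
    simp; omega
  have hprod : ∏ i ∈ (univ.erase k).erase j,
      (if i = k then h false + h true else if i = j then h' false + h' true else 2)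
      = (2:ℝ)^(m-2) := by
    rw [Finset.prod_eq_pow_card (fun i hi => ?_), hc]
    have h1 := Finset.ne_of_mem_erase hi
    have h2 := Finset.ne_of_mem_erase (Finset.mem_of_mem_erase hi)
    rw [if_neg h2, if_neg h1]
  rw [hprod]
  · have hm : 2 ≤ m := by
      by_contra hcon
      push_neg at hcon
      interval_cases m
      · exact absurd k.2 (by simp)
      · exact hkj (Fin.ext (by omega))
    have h2m : (2:ℝ)^m = 2^(m-2) * 4 := by
      have hsplit : m = (m-2) + 2 := by omega
      conv_lhs => rw [hsplit]
      rw [pow_add]; norm_num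
    rw [h2m]; ring

lemma sum_Icc_one (m : ℕ) (f : ℕ → ℝ) :
    ∑ x ∈ Finset.Icc 1 m, f x = ∑ i : Fin m, f (i + 1) := by
  rw [← Finset.Ico_add_one_right_eq_Icc, Finset.sum_Ico_eq_sum_range,
    Fin.sum_univ_eq_sum_range (fun i => f (i+1))]
  exact Finset.sum_congr rfl fun i _ => by rw [Nat.add_comm]

theorem stmt1 (n : ℕ) (hn : 2 ≤ n) (σ : Fin (n-1) → Bool) :
    ∑ t : Fin (n-1) → Bool,
      (∑ k : Fin (n-1), bval (t k) * (2:ℝ)^(-((n:ℤ)-((k:ℕ)+1)))) *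
      (∑ k : Fin (n-1), bval (Bool.xor (t k) (σ k)) * (2:ℝ)^(-(((k:ℕ):ℤ)+1)))
    = 1/4 * (∑ k : Fin (n-1), bval (!(σ k)))
      + 1/8 * ∑ k₁ ∈ Finset.Icc 1 (n-1), ∑ k₂ ∈ Finset.Icc 1 (n-1),
          (if k₁ ≠ k₂ then (2:ℝ)^((k₁:ℤ)-(k₂:ℤ)) else 0) := by
  have h2 : (2:ℝ) ≠ 0 := two_ne_zero
  simp_rw [Finset.sum_mul_sum, mul_mul_mul_comm]
  rw [Finset.sum_comm]
  have key : ∀ k : Fin (n-1),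
      ∑ t : Fin (n-1) → Bool, ∑ j : Fin (n-1),
        bval (t k) * bval (t j ^^ σ j) * ((2:ℝ) ^ (-((n:ℤ) - ((k:ℕ)+1))) * 2 ^ (-(((j:ℕ):ℤ) + 1)))
      = ∑ j : Fin (n-1),
        ((if k = j then 1/4 * bval (!σ k) else 0)
          + 1/8 * (if k ≠ j then (2:ℝ)^(((k:ℕ):ℤ) - ((j:ℕ):ℤ)) else 0)) := by
    intro k
    rw [Finset.sum_comm]
    refine Finset.sum_congr rfl fun j _ => ?_
    rw [← Finset.sum_mul]
    by_cases hkj : k = j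
    · subst hkj
      rw [if_pos rfl, if_neg (by simp), mul_zero, add_zero]
      have e : ∀ t : Fin (n-1) → Bool,
          bval (t k) * bval (t k ^^ σ k) = bval (!σ k) * bval (t k) := by
        intro t; cases htk : t k <;> cases hσ : σ k <;> simp [bval]
      simp_rw [e]
      rw [sum_single k (fun b => bval (!σ k) * bval b)]
      have h14 : (2:ℝ)^(n-1-1) * ((2:ℝ)^(-((n:ℤ)-((k:ℕ)+1))) * (2:ℝ)^(-(((k:ℕ):ℤ)+1))) = 1/4 := by
        rw [← zpow_natCast (2:ℝ) (n-1-1), ← zpow_add₀ h2, ← zpow_add₀ h2,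
          show (((n-1-1:ℕ):ℤ) + (-((n:ℤ)-((k:ℕ)+1)) + -(((k:ℕ):ℤ)+1))) = -2 by omega]
        norm_num
      have hb : bval false = 0 ∧ bval true = 1 := by simp [bval]
      rw [hb.1, hb.2]
      linear_combination bval (!σ k) * h14
    · rw [if_neg hkj, zero_add]
      rw [sum_double k j hkj bval (fun b => bval (b ^^ σ j))]
      have hb1 : bval false + bval true = 1 := by simp [bval]
      have hb2 : bval (false ^^ σ j) + bval (true ^^ σ j) = 1 := by
        cases σ j <;> simp [bval]
      rw [hb1, hb2, if_pos hkj]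
      have h18 : (2:ℝ)^(n-1) * ((2:ℝ)^(-((n:ℤ)-((k:ℕ)+1))) * (2:ℝ)^(-(((j:ℕ):ℤ)+1)))
          = 1/2 * (2:ℝ)^(((k:ℕ):ℤ) - ((j:ℕ):ℤ)) := by
        rw [← zpow_natCast (2:ℝ) (n-1), ← zpow_add₀ h2, ← zpow_add₀ h2,
          show (((n-1:ℕ):ℤ) + (-((n:ℤ)-((k:ℕ)+1)) + -(((j:ℕ):ℤ)+1)))
            = -1 + (((k:ℕ):ℤ) - ((j:ℕ):ℤ)) by omega,
          zpow_add₀ h2]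
        norm_num
      linear_combination (1/4) * h18
  rw [Finset.sum_congr rfl fun k _ => key k]
  simp_rw [Finset.sum_add_distrib]
  have hA : ∀ k : Fin (n-1), (∑ j : Fin (n-1), if k = j then 1/4 * bval (!σ k) else 0)
      = 1/4 * bval (!σ k) := by
    intro k; rw [Finset.sum_ite_eq]; simp
  simp_rw [hA]
  have hD : ∑ k₁ ∈ Finset.Icc 1 (n-1), ∑ k₂ ∈ Finset.Icc 1 (n-1),
        (if k₁ ≠ k₂ then (2:ℝ)^((k₁:ℤ)-(k₂:ℤ)) else 0)
      = ∑ k : Fin (n-1), ∑ j : Fin (n-1),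
        (if k ≠ j then (2:ℝ)^(((k:ℕ):ℤ) - ((j:ℕ):ℤ)) else 0) := by
    rw [sum_Icc_one]
    refine Finset.sum_congr rfl fun k _ => ?_
    rw [sum_Icc_one]
    refine Finset.sum_congr rfl fun j _ => ?_
    by_cases hkj : k = j
    · subst hkj; simp
    · rw [if_pos (by simpa using fun h => hkj (Fin.ext h)), if_pos hkj]
      congr 1; push_cast; ring
  rw [hD]
  rw [Finset.mul_sum, Finset.mul_sum]
  congr 1
  exact Finset.sum_congr rfl fun k _ => by rw [Finset.mul_sum]
end

section
/- For any point set P = {x₀,…,x_{N−1}} in [0,1)² with x_k = (x_{k,1}, x_{k,2}), the squared L₂ discrepancy satisfies Warnock's formula: (N·L₂(P))² = N²/9 − (N/2)∑_{k=0}^{N−1} ∏_{i=1}^{2}(1 − x_{k,i}²) + ∑_{k,l=0}^{N−1} ∏_{i=1}^{2}(1 − max{x_{k,i}, x_{l,i}}). -/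
open MeasureTheory
set_option maxHeartbeats 1000000

lemma step_eq_indicator (c : ℝ) (g : ℝ → ℝ) :
    (fun t => if c < t then g t else 0) = (Set.Ioi c).indicator g := by
  funext t; simp [Set.indicator_apply, Set.mem_Ioi]

lemma step_intble (a b c : ℝ) {g : ℝ → ℝ} (hg : Continuous g) :
    IntervalIntegrable (fun t => if c < t then g t else 0) volume a b := by
  rw [step_eq_indicator, intervalIntegrable_iff]
  have := hg.intervalIntegrable (μ := volume) a b
  rw [intervalIntegrable_iff] at this
  exact this.indicator measurableSet_Ioi

lemma step_integral (c : ℝ) (h0 : 0 ≤ c) (h1 : c ≤ 1) {g : ℝ → ℝ} (hg : Continuous g) :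
    ∫ t in (0:ℝ)..1, (if c < t then g t else 0) = ∫ t in c..1, g t := by
  rw [← intervalIntegral.integral_add_adjacent_intervals (step_intble 0 c c hg)
    (step_intble c 1 c hg)]
  have e1 : ∫ t in (0:ℝ)..c, (if c < t then g t else 0) = 0 := by
    rw [intervalIntegral.integral_congr (g := fun _ => (0:ℝ))
      (fun t ht => by
        rw [Set.uIcc_of_le h0] at ht
        simp [not_lt.mpr ht.2])]
    simp
  have e2 : ∫ t in c..1, (if c < t then g t else 0) = ∫ t in c..1, g t := by
    apply intervalIntegral.integral_congr_ae
    filter_upwards with t ht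
    rw [Set.uIoc_of_le h1] at ht
    simp [ht.1]
  rw [e1, e2, zero_add]

lemma intble_sum {ι : Type*} (s : Finset ι) (f : ι → ℝ → ℝ) {μ : Measure ℝ} {a b : ℝ}
    (h : ∀ i ∈ s, IntervalIntegrable (f i) μ a b) :
    IntervalIntegrable (fun t => ∑ i ∈ s, f i t) μ a b := by
  have h2 := IntervalIntegrable.sum s h
  rwa [show (∑ i ∈ s, f i) = fun t => ∑ i ∈ s, f i t from funext fun t => Finset.sum_apply t s f] at h2

lemma outer_integral {M : ℕ} (aa : Fin M → ℝ) (ha : ∀ k, aa k ∈ Set.Ico (0:ℝ) 1)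
    (c : Fin M → Fin M → ℝ) (d : Fin M → ℝ) (e : ℝ) :
    ∫ t in (0:ℝ)..1,
      ((∑ k, ∑ l, (if aa k < t then (1:ℝ) else 0) * (if aa l < t then (1:ℝ) else 0) * c k l)
        - (∑ k, (if aa k < t then (1:ℝ) else 0) * d k) * t + e * t^2)
    = (∑ k, ∑ l, c k l * (1 - max (aa k) (aa l)))
        - (∑ k, d k * (1 - (aa k)^2)) / 2 + e / 3 := by
  have hstep : ∀ (k l : Fin M) (t : ℝ),
      (if aa k < t then (1:ℝ) else 0) * (if aa l < t then (1:ℝ) else 0) * c k l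
      = if max (aa k) (aa l) < t then c k l else 0 := by
    intro k l t
    by_cases h1 : aa k < t <;> by_cases h2 : aa l < t <;>
      simp [h1, h2, max_lt_iff]
  -- rewrite integrand
  have e0 : (fun t => (∑ k, ∑ l, (if aa k < t then (1:ℝ) else 0) * (if aa l < t then (1:ℝ) else 0) * c k l)
        - (∑ k, (if aa k < t then (1:ℝ) else 0) * d k) * t + e * t^2)
      = fun t => (∑ k, ∑ l, if max (aa k) (aa l) < t then c k l else 0)
        - (∑ k, if aa k < t then d k * t else 0) + e * t^2 := by
    funext t
    congr 1
    congr 1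
    · exact Finset.sum_congr rfl fun k _ => Finset.sum_congr rfl fun l _ => hstep k l t
    · rw [Finset.sum_mul]
      exact Finset.sum_congr rfl fun k _ => by by_cases h : aa k < t <;> simp [h]
  rw [e0]
  have i1 : ∀ k l : Fin M, IntervalIntegrable (fun t => if max (aa k) (aa l) < t then c k l else 0) volume 0 1 :=
    fun k l => step_intble 0 1 _ continuous_const
  have i1s : IntervalIntegrable (fun t => ∑ k, ∑ l, if max (aa k) (aa l) < t then c k l else 0) volume 0 1 :=
    intble_sum _ _ fun k _ => intble_sum _ _ fun l _ => i1 k l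
  have i2 : ∀ k : Fin M, IntervalIntegrable (fun t => if aa k < t then d k * t else 0) volume 0 1 :=
    fun k => step_intble 0 1 (aa k) (g := fun t => d k * t) (continuous_const.mul continuous_id)
  have i2s : IntervalIntegrable (fun t => ∑ k, if aa k < t then d k * t else 0) volume 0 1 :=
    intble_sum _ _ fun k _ => i2 k
  have i3 : IntervalIntegrable (fun t : ℝ => e * t^2) volume 0 1 := (continuous_const.mul (continuous_pow 2)).intervalIntegrable _ _
  rw [intervalIntegral.integral_add (i1s.sub i2s) i3, intervalIntegral.integral_sub i1s i2s,
    intervalIntegral.integral_finset_sum (fun k _ => intble_sum _ _ fun l _ => i1 k l),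
    intervalIntegral.integral_finset_sum (fun k _ => i2 k)]
  have hmax : ∀ k l : Fin M, 0 ≤ max (aa k) (aa l) ∧ max (aa k) (aa l) ≤ 1 := fun k l =>
    ⟨le_max_of_le_left (ha k).1, max_le (ha k).2.le (ha l).2.le⟩
  have v1 : ∀ k l : Fin M, (∫ t in (0:ℝ)..1, if max (aa k) (aa l) < t then c k l else 0)
      = c k l * (1 - max (aa k) (aa l)) := by
    intro k l
    rw [step_integral _ (hmax k l).1 (hmax k l).2 continuous_const]
    simp [mul_comm]
  have v2 : ∀ k : Fin M, (∫ t in (0:ℝ)..1, if aa k < t then d k * t else 0)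
      = d k * (1 - (aa k)^2) / 2 := by
    intro k
    rw [step_integral (aa k) (ha k).1 (ha k).2.le (g := fun t => d k * t) (continuous_const.mul continuous_id)]
    rw [intervalIntegral.integral_const_mul, integral_id]
    ring
  have v3 : (∫ t in (0:ℝ)..1, e * t^2) = e / 3 := by
    rw [intervalIntegral.integral_const_mul, integral_pow]
    norm_num
    ring
  rw [v3]
  congr 2
  · exact Finset.sum_congr rfl fun k _ => by
      rw [intervalIntegral.integral_finset_sum (fun l _ => i1 k l)]
      exact Finset.sum_congr rfl fun l _ => v1 k l
  · rw [Finset.sum_div]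
    exact Finset.sum_congr rfl fun k _ => v2 k

lemma quad_integral {M : ℕ} (u : Fin M → ℝ) (y : Fin M → ℝ)
    (hy : ∀ k, y k ∈ Set.Ico (0:ℝ) 1) (r : ℝ) :
    ∫ t in (0:ℝ)..1, ((∑ k, u k * (if y k < t then (1:ℝ) else 0)) - r * t)^2
    = (∑ k, ∑ l, (u k * u l) * (1 - max (y k) (y l)))
      - (∑ k, (2 * r * u k) * (1 - (y k)^2)) / 2 + r^2 / 3 := by
  rw [← outer_integral y hy (fun k l => u k * u l) (fun k => 2 * r * u k) (r^2)]
  apply intervalIntegral.integral_congr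
  intro t _
  have h1 : (∑ k, u k * (if y k < t then (1:ℝ) else 0))^2
      = ∑ k, ∑ l, (if y k < t then (1:ℝ) else 0) * (if y l < t then (1:ℝ) else 0) * (u k * u l) := by
    rw [sq, Finset.sum_mul_sum]
    exact Finset.sum_congr rfl fun k _ => Finset.sum_congr rfl fun l _ => by ring
  have h2 : (∑ k, u k * (if y k < t then (1:ℝ) else 0)) * (2*(r*t))
      = (∑ k, (if y k < t then (1:ℝ) else 0) * (2*r*u k)) * t := by
    rw [Finset.sum_mul, Finset.sum_mul]
    exact Finset.sum_congr rfl fun k _ => by ring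
  simp only []
  linear_combination h1 - h2

theorem stmt16 (N : ℕ) (hN : 0 < N) (x : Fin N → ℝ × ℝ)
    (hx : ∀ k, x k ∈ Set.Ico (0:ℝ) 1 ×ˢ Set.Ico (0:ℝ) 1) :
    ((N:ℝ))^2 * ∫ t₁ in (0:ℝ)..1, ∫ t₂ in (0:ℝ)..1,
        ((1/(N:ℝ)) * ∑ k : Fin N,
            (Set.Ico (0:ℝ) t₁ ×ˢ Set.Ico (0:ℝ) t₂).indicator 1 (x k) - t₁ * t₂)^2
    = (N:ℝ)^2/9
      - (N:ℝ)/2 * ∑ k : Fin N, (1 - (x k).1^2) * (1 - (x k).2^2)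
      + ∑ k : Fin N, ∑ l : Fin N,
          (1 - max (x k).1 (x l).1) * (1 - max (x k).2 (x l).2) := by
  have hx1 : ∀ k, (x k).1 ∈ Set.Ico (0:ℝ) 1 := fun k => (hx k).1
  have hx2 : ∀ k, (x k).2 ∈ Set.Ico (0:ℝ) 1 := fun k => (hx k).2
  have hN' : ((N:ℝ)) ≠ 0 := Nat.cast_ne_zero.mpr hN.ne'
  have hind : ∀ (k : Fin N) (t₁ t₂ : ℝ),
      (Set.Ico (0:ℝ) t₁ ×ˢ Set.Ico (0:ℝ) t₂).indicator 1 (x k)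
      = (if (x k).1 < t₁ then (1:ℝ) else 0) * (if (x k).2 < t₂ then (1:ℝ) else 0) := by
    intro k t₁ t₂
    have h1 : (0:ℝ) ≤ (x k).1 := (hx1 k).1
    have h2 : (0:ℝ) ≤ (x k).2 := (hx2 k).1
    by_cases H1 : (x k).1 < t₁ <;> by_cases H2 : (x k).2 < t₂ <;>
      simp [Set.indicator_apply, Set.mem_prod, Set.mem_Ico, h1, h2, H1, H2]
  have hin : ∀ t₁ : ℝ,
      (N:ℝ)^2 * (∫ t₂ in (0:ℝ)..1,
        ((1/(N:ℝ)) * ∑ k : Fin N,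
            (Set.Ico (0:ℝ) t₁ ×ˢ Set.Ico (0:ℝ) t₂).indicator 1 (x k) - t₁ * t₂)^2)
      = (∑ k, ∑ l, (if (x k).1 < t₁ then (1:ℝ) else 0) * (if (x l).1 < t₁ then (1:ℝ) else 0)
            * (1 - max (x k).2 (x l).2))
        - (∑ k, (if (x k).1 < t₁ then (1:ℝ) else 0) * ((N:ℝ) * (1 - (x k).2^2))) * t₁
        + ((N:ℝ)^2/3) * t₁^2 := by
    intro t₁
    rw [← intervalIntegral.integral_const_mul]
    have e1 : (fun t₂ => (N:ℝ)^2 *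
        ((1/(N:ℝ)) * ∑ k : Fin N,
            (Set.Ico (0:ℝ) t₁ ×ˢ Set.Ico (0:ℝ) t₂).indicator 1 (x k) - t₁ * t₂)^2)
        = fun t₂ => ((∑ k, (if (x k).1 < t₁ then (1:ℝ) else 0) * (if (x k).2 < t₂ then (1:ℝ) else 0))
            - ((N:ℝ)*t₁) * t₂)^2 := by
      funext t₂
      simp only [hind]
      field_simp
    rw [e1, quad_integral (fun k => if (x k).1 < t₁ then (1:ℝ) else 0) (fun k => (x k).2) hx2
      ((N:ℝ)*t₁)]
    have hs : (∑ k, (2*((N:ℝ)*t₁)*(if (x k).1 < t₁ then (1:ℝ) else 0))*(1 - (x k).2^2))/2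
        = (∑ k, (if (x k).1 < t₁ then (1:ℝ) else 0) * ((N:ℝ)*(1 - (x k).2^2)))*t₁ := by
      rw [Finset.sum_mul, Finset.sum_div]
      exact Finset.sum_congr rfl fun k _ => by ring
    rw [hs]
    ring
  rw [← intervalIntegral.integral_const_mul]
  have H1 : (∫ t₁ in (0:ℝ)..1, (N:ℝ)^2 * ∫ t₂ in (0:ℝ)..1,
        ((1/(N:ℝ)) * ∑ k : Fin N,
            (Set.Ico (0:ℝ) t₁ ×ˢ Set.Ico (0:ℝ) t₂).indicator 1 (x k) - t₁ * t₂)^2)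
      = ∫ t₁ in (0:ℝ)..1,
        ((∑ k, ∑ l, (if (x k).1 < t₁ then (1:ℝ) else 0) * (if (x l).1 < t₁ then (1:ℝ) else 0)
            * (1 - max (x k).2 (x l).2))
        - (∑ k, (if (x k).1 < t₁ then (1:ℝ) else 0) * ((N:ℝ) * (1 - (x k).2^2))) * t₁
        + ((N:ℝ)^2/3) * t₁^2) :=
    intervalIntegral.integral_congr fun t₁ _ => hin t₁
  rw [H1, outer_integral (fun k => (x k).1) hx1
    (fun k l => 1 - max (x k).2 (x l).2) (fun k => (N:ℝ) * (1 - (x k).2^2)) ((N:ℝ)^2/3)]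
  have A : (∑ k : Fin N, ∑ l : Fin N, (1 - max (x k).2 (x l).2) * (1 - max (x k).1 (x l).1))
      = ∑ k : Fin N, ∑ l : Fin N, (1 - max (x k).1 (x l).1) * (1 - max (x k).2 (x l).2) :=
    Finset.sum_congr rfl fun k _ => Finset.sum_congr rfl fun l _ => by ring
  have B : (∑ k : Fin N, ((N:ℝ) * (1 - (x k).2^2)) * (1 - (x k).1^2))/2
      = (N:ℝ)/2 * ∑ k : Fin N, (1 - (x k).1^2) * (1 - (x k).2^2) := by
    rw [Finset.mul_sum, Finset.sum_div]
    exact Finset.sum_congr rfl fun k _ => by ring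
  rw [A, B]
  ring
end
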